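/- arXiv:2210.01239 — 2 statements merged into one kernel-verified Lean document; each statement's English description precedes it below -/
import Mathlib

section
/- Let f, g be measurable real-valued functions on the circle S with ‖f‖_p < ∞ and ‖g‖_p < ∞ for some p ∈ [1, ∞]. Then ‖f* - g*‖_p ≤ ‖f - g‖_p, where f* and g* denote the symmetric non-increasing rearrangements. -/
/-!
For `φ : α → ℝ` and `t ≥ 0` put `Φ_φ(t) = ∫ (|φ| - t)⁺`. Since
`c ^ q = q (q - 1) ∫₀^∞ t ^ (q - 2) (c - t)⁺ dt` for `c ≥ 0`, `q > 1`, and `‖φ‖_∞ ≤ t` iff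
`Φ_φ(t) = 0`, the pointwise bound `Φ_φ ≤ Φ_ψ` gives `‖φ‖_p ≤ ‖ψ‖_p` for every `p ≥ 1`.

Slicing in the level `s`, `∫ (u - v - t)⁺ = ∫ μ {s + t < u, v ≤ s} ds`. A symmetric
non-increasing function is a non-increasing function of `|x|`, so the superlevel sets of any
two of them are nested, and `μ ({a < f*} \ {b < g*}) = μ {a < f*} - μ {b < g*}`. This depends
only on the distributions of `f` and `g`, and is at most `μ ({a < f} \ {b < g})`.
Hence `Φ_{f* - g*} ≤ Φ_{f - g}`.
-/

open MeasureTheory Set Filter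
open scoped ENNReal NNReal

noncomputable section

/-- The circle of circumference `1`, parametrised by the interval `(-1/2, 1/2]`. -/
def circ : Set ℝ := Set.Ioc (-(1/2) : ℝ) (1/2)

/-- Lebesgue measure on the circle. -/
def μc : Measure ℝ := volume.restrict circ

/-- `f : ℝ → ℝ` is a symmetric non-increasing function on the circle. -/
structure SymNonInc (f : ℝ → ℝ) : Prop where
  symm : ∀ x ∈ Set.Ioo (-(1/2) : ℝ) (1/2), f (-x) = f x
  anti : AntitoneOn f (Set.Ico (0 : ℝ) (1/2))
  leftCont0 : ContinuousWithinAt f (Set.Iic (0 : ℝ)) 0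
  leftCont : ∀ x ∈ Set.Ioo (0 : ℝ) (1/2), ContinuousWithinAt f (Set.Iic x) x
  rightContHalf : ContinuousWithinAt f (Set.Iic (1/2 : ℝ)) (1/2)

/-- `g` is the symmetric non-increasing rearrangement of `f`: it is symmetric non-increasing
and has the same distribution as `f` under the Lebesgue measure of the circle. -/
def IsRearrangement (f g : ℝ → ℝ) : Prop :=
  SymNonInc g ∧ ∀ a : ℝ, μc {x | g x ≤ a} = μc {x | f x ≤ a}

section

variable {α : Type*} [MeasurableSpace α] {μ : Measure α}

theorem measurableSet_setOf_add_lt_and_le {u v : α → ℝ} (hu : Measurable u) (hv : Measurable v)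
    (t : ℝ) :
    MeasurableSet {p : α × ℝ | p.2 + t < u p.1 ∧ v p.1 ≤ p.2} :=
  (measurableSet_lt (measurable_snd.add_const t) (hu.comp measurable_fst)).inter
    (measurableSet_le (hv.comp measurable_fst) measurable_snd)

theorem lintegral_ofReal_sub_sub_eq [SFinite μ] {u v : α → ℝ} (hu : Measurable u)
    (hv : Measurable v) (t : ℝ) :
    ∫⁻ x, ENNReal.ofReal (u x - v x - t) ∂μ = ∫⁻ s, μ {x | s + t < u x ∧ v x ≤ s} := by
  have hK := measurableSet_setOf_add_lt_and_le hu hv t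
  calc ∫⁻ x, ENNReal.ofReal (u x - v x - t) ∂μ
      = ∫⁻ x, volume (Prod.mk x ⁻¹' {p : α × ℝ | p.2 + t < u p.1 ∧ v p.1 ≤ p.2}) ∂μ := by
        refine lintegral_congr fun x => ?_
        have hslice : Prod.mk x ⁻¹' {p : α × ℝ | p.2 + t < u p.1 ∧ v p.1 ≤ p.2}
            = Ico (v x) (u x - t) := by
          ext s
          simp only [mem_preimage, mem_ofPred_eq, mem_Ico]
          constructor <;> rintro ⟨h₁, h₂⟩ <;> constructor <;> linarith
        rw [hslice, Real.volume_Ico, sub_right_comm]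
    _ = μ.prod volume {p : α × ℝ | p.2 + t < u p.1 ∧ v p.1 ≤ p.2} :=
        (Measure.prod_apply hK).symm
    _ = ∫⁻ s, μ {x | s + t < u x ∧ v x ≤ s} := Measure.prod_apply_symm hK

theorem lintegral_ofReal_abs_sub_sub_eq [SFinite μ] {u v : α → ℝ} (hu : AEMeasurable u μ)
    (hv : AEMeasurable v μ) {t : ℝ} (ht : 0 ≤ t) :
    ∫⁻ x, ENNReal.ofReal (|u x - v x| - t) ∂μ =
      ∫⁻ s, (μ {x | s + t < u x ∧ v x ≤ s} + μ {x | s + t < v x ∧ u x ≤ s}) := by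
  wlog hm : Measurable u ∧ Measurable v generalizing u v
  · convert this hu.measurable_mk.aemeasurable hv.measurable_mk.aemeasurable
      ⟨hu.measurable_mk, hv.measurable_mk⟩ using 1
    · exact lintegral_congr_ae <| by
        filter_upwards [hu.ae_eq_mk, hv.ae_eq_mk] with x hux hvx
        rw [hux, hvx]
    · refine lintegral_congr fun s => ?_
      congr 1 <;> refine measure_congr ?_ <;>
        filter_upwards [hu.ae_eq_mk, hv.ae_eq_mk] with x hux hvx <;>
        change (_ ∧ _) = (_ ∧ _) <;> rw [hux, hvx]
  obtain ⟨hu, hv⟩ := hm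
  have hsplit : ∀ x, ENNReal.ofReal (|u x - v x| - t)
      = ENNReal.ofReal (u x - v x - t) + ENNReal.ofReal (v x - u x - t) := by
    intro x
    rcases le_total (v x) (u x) with hle | hle
    · rw [abs_of_nonneg (by linarith), ENNReal.ofReal_of_nonpos (by linarith : v x - u x - t ≤ 0),
        add_zero]
    · rw [abs_of_nonpos (by linarith), ENNReal.ofReal_of_nonpos (by linarith : u x - v x - t ≤ 0),
        zero_add, neg_sub]
  rw [lintegral_congr hsplit, lintegral_add_left (by fun_prop), lintegral_ofReal_sub_sub_eq hu hv,
    lintegral_ofReal_sub_sub_eq hv hu]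
  exact (lintegral_add_left
    (measurable_measure_prodMk_right (measurableSet_setOf_add_lt_and_le hu hv t)) _).symm

theorem integral_rpow_sub_two_mul_sub {q c : ℝ} (hq : 1 < q) (hc : 0 ≤ c) :
    ∫ t in (0)..c, t ^ (q - 2) * (c - t) = c ^ q / (q * (q - 1)) := by
  have hexpand : ∀ t ∈ uIcc 0 c, t ^ (q - 2) * (c - t) = c * t ^ (q - 2) - t ^ (q - 1) := by
    intro t ht
    have ht0 : 0 ≤ t := by rw [uIcc_of_le hc] at ht; exact ht.1
    rw [show q - 1 = q - 2 + 1 by ring, Real.rpow_add' ht0 (by linarith), Real.rpow_one]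
    ring
  have hint : ∀ r : ℝ, -1 < r → IntervalIntegrable (fun t : ℝ => t ^ r) volume 0 c :=
    fun r hr => intervalIntegral.intervalIntegrable_rpow' hr
  rw [intervalIntegral.integral_congr hexpand,
    intervalIntegral.integral_sub ((hint _ (by linarith)).const_mul c) (hint _ (by linarith)),
    intervalIntegral.integral_const_mul, integral_rpow (Or.inl (by linarith)),
    integral_rpow (Or.inl (by linarith)), Real.zero_rpow (by linarith),
    Real.zero_rpow (by linarith), show q - 2 + 1 = q - 1 by ring, show q - 1 + 1 = q by ring,
    sub_zero, sub_zero, ← mul_div_assoc, ← Real.rpow_one_add' hc (by linarith), add_sub_cancel]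
  have : q - 1 ≠ 0 := by linarith
  field_simp
  ring

theorem ofReal_rpow_eq_lintegral {q c : ℝ} (hq : 1 < q) (hc : 0 ≤ c) :
    ENNReal.ofReal (c ^ q) = ENNReal.ofReal (q * (q - 1)) *
      ∫⁻ t in Ioi 0, ENNReal.ofReal (t ^ (q - 2)) * ENNReal.ofReal (c - t) := by
  have hqq : 0 < q * (q - 1) := mul_pos (by linarith) (by linarith)
  have hint : IntegrableOn (fun t : ℝ => t ^ (q - 2) * (c - t)) (Ioc 0 c) :=
    (intervalIntegrable_iff_integrableOn_Ioc_of_le hc).1 <|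
      (intervalIntegral.intervalIntegrable_rpow' (by linarith)).mul_continuousOn
        (by fun_prop)
  have hnonneg : 0 ≤ᵐ[volume.restrict (Ioc 0 c)] fun t : ℝ => t ^ (q - 2) * (c - t) :=
    (ae_restrict_iff' measurableSet_Ioc).2 <| .of_forall fun t ht =>
      mul_nonneg (Real.rpow_nonneg ht.1.le _) (by linarith [ht.2])
  have hvanish : ∫⁻ t in Ioi c, ENNReal.ofReal (t ^ (q - 2)) * ENNReal.ofReal (c - t) = 0 :=
    setLIntegral_eq_zero measurableSet_Ioi fun t ht => by
      simp [ENNReal.ofReal_of_nonpos (sub_nonpos.2 (le_of_lt ht))]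
  rw [← Ioc_union_Ioi_eq_Ioi hc, lintegral_union measurableSet_Ioi (Ioc_disjoint_Ioi le_rfl),
    hvanish, add_zero, setLIntegral_congr_fun measurableSet_Ioc
      fun t ht => (ENNReal.ofReal_mul (Real.rpow_nonneg ht.1.le _)).symm,
    ← ofReal_integral_eq_lintegral_ofReal hint hnonneg, ← intervalIntegral.integral_of_le hc,
    integral_rpow_sub_two_mul_sub hq hc, ← ENNReal.ofReal_mul hqq.le, mul_div_cancel₀ _ hqq.ne']

theorem lintegral_ofReal_abs_rpow_eq [SFinite μ] {φ : α → ℝ} (hφ : AEMeasurable φ μ) {q : ℝ}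
    (hq : 1 < q) :
    ∫⁻ x, ENNReal.ofReal (|φ x| ^ q) ∂μ = ENNReal.ofReal (q * (q - 1)) *
      ∫⁻ t in Ioi 0, ENNReal.ofReal (t ^ (q - 2)) * ∫⁻ x, ENNReal.ofReal (|φ x| - t) ∂μ := by
  simp_rw [ofReal_rpow_eq_lintegral hq (abs_nonneg _),
    ← lintegral_const_mul' _ _ ENNReal.ofReal_ne_top]
  exact lintegral_lintegral_swap (by fun_prop)

theorem lintegral_ofReal_abs_rpow_le [SFinite μ] {φ ψ : α → ℝ} (hφ : AEMeasurable φ μ)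
    (hψ : AEMeasurable ψ μ)
    (hdom : ∀ t, 0 ≤ t →
      ∫⁻ x, ENNReal.ofReal (|φ x| - t) ∂μ ≤ ∫⁻ x, ENNReal.ofReal (|ψ x| - t) ∂μ)
    {q : ℝ} (hq : 1 ≤ q) :
    ∫⁻ x, ENNReal.ofReal (|φ x| ^ q) ∂μ ≤ ∫⁻ x, ENNReal.ofReal (|ψ x| ^ q) ∂μ := by
  rcases hq.eq_or_lt with rfl | hq
  · simpa using hdom 0 le_rfl
  rw [lintegral_ofReal_abs_rpow_eq hφ hq, lintegral_ofReal_abs_rpow_eq hψ hq]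
  exact mul_le_mul_right (setLIntegral_mono' measurableSet_Ioi fun t ht =>
    mul_le_mul_right (hdom t (le_of_lt ht)) _) _

theorem eLpNormEssSup_le_of_lintegral_ofReal_abs_sub_le {φ ψ : α → ℝ} (hφ : AEMeasurable φ μ)
    (hdom : ∀ t, 0 ≤ t →
      ∫⁻ x, ENNReal.ofReal (|φ x| - t) ∂μ ≤ ∫⁻ x, ENNReal.ofReal (|ψ x| - t) ∂μ) :
    eLpNormEssSup φ μ ≤ eLpNormEssSup ψ μ := by
  set C := eLpNormEssSup ψ μ
  rcases eq_or_ne C ⊤ with hC | hC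
  · exact hC ▸ le_top
  have hψ_le : ∀ᵐ x ∂μ, |ψ x| ≤ C.toReal := by
    filter_upwards [ae_le_eLpNormEssSup (f := ψ)] with x hx
    rwa [Real.enorm_eq_ofReal_abs, ENNReal.ofReal_le_iff_le_toReal hC] at hx
  have hψ_zero : ∫⁻ x, ENNReal.ofReal (|ψ x| - C.toReal) ∂μ = 0 :=
    lintegral_eq_zero_of_ae_eq_zero <| by
      filter_upwards [hψ_le] with x hx
      simpa using hx
  have hφ_zero := le_antisymm ((hdom _ ENNReal.toReal_nonneg).trans_eq hψ_zero) (zero_le ..)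
  have hφ_le : ∀ᵐ x ∂μ, ‖φ x‖ ≤ C.toReal := by
    filter_upwards [(lintegral_eq_zero_iff' (by fun_prop)).1 hφ_zero] with x hx
    simpa [sub_nonpos] using hx
  exact (eLpNormEssSup_le_of_ae_bound hφ_le).trans_eq (ENNReal.ofReal_toReal hC)

theorem eLpNorm_le_of_lintegral_ofReal_abs_sub_le [SFinite μ] {φ ψ : α → ℝ}
    (hφ : AEMeasurable φ μ) (hψ : AEMeasurable ψ μ)
    (hdom : ∀ t, 0 ≤ t →
      ∫⁻ x, ENNReal.ofReal (|φ x| - t) ∂μ ≤ ∫⁻ x, ENNReal.ofReal (|ψ x| - t) ∂μ)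
    {p : ℝ≥0∞} (hp : 1 ≤ p) :
    eLpNorm φ p μ ≤ eLpNorm ψ p μ := by
  rcases eq_or_ne p ⊤ with rfl | hp_top
  · simpa only [eLpNorm_exponent_top] using
      eLpNormEssSup_le_of_lintegral_ofReal_abs_sub_le hφ hdom
  have hp_zero : p ≠ 0 := (zero_lt_one.trans_le hp).ne'
  have hq : 1 ≤ p.toReal := by simpa using ENNReal.toReal_mono hp_top hp
  have henorm : ∀ χ : α → ℝ,
      ∫⁻ x, ‖χ x‖ₑ ^ p.toReal ∂μ = ∫⁻ x, ENNReal.ofReal (|χ x| ^ p.toReal) ∂μ := fun χ =>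
    lintegral_congr fun x => by
      rw [Real.enorm_eq_ofReal_abs, ENNReal.ofReal_rpow_of_nonneg (abs_nonneg _) (by linarith)]
  rw [eLpNorm_eq_lintegral_rpow_enorm_toReal hp_zero hp_top,
    eLpNorm_eq_lintegral_rpow_enorm_toReal hp_zero hp_top, henorm, henorm]
  exact ENNReal.rpow_le_rpow (lintegral_ofReal_abs_rpow_le hφ hψ hdom hq) (by positivity)

end

theorem μc_eq_restrict_Ioo : μc = volume.restrict (Ioo (-(1/2)) (1/2)) :=
  Measure.restrict_congr_set Ioo_ae_eq_Ioc.symm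

instance : IsFiniteMeasure μc := by
  rw [μc_eq_restrict_Ioo]
  exact isFiniteMeasure_restrict.2 measure_Ioo_lt_top.ne

theorem ae_mem_Ioo_μc : ∀ᵐ x ∂μc, x ∈ Ioo (-(1/2) : ℝ) (1/2) :=
  μc_eq_restrict_Ioo ▸ ae_restrict_mem measurableSet_Ioo

namespace SymNonInc

variable {h h₁ h₂ : ℝ → ℝ}

theorem apply_le_of_abs_le (hh : SymNonInc h) {x y : ℝ} (hx : x ∈ Ioo (-(1/2)) (1/2))
    (hy : y ∈ Ioo (-(1/2)) (1/2)) (hxy : |x| ≤ |y|) : h y ≤ h x := by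
  have habs : ∀ z ∈ Ioo (-(1/2) : ℝ) (1/2), h |z| = h z := by
    intro z hz
    rcases abs_choice z with hz' | hz' <;> rw [hz']
    exact hh.symm z hz
  rw [← habs x hx, ← habs y hy]
  exact hh.anti ⟨abs_nonneg x, abs_lt.2 hx⟩ ⟨abs_nonneg y, abs_lt.2 hy⟩ hxy

theorem aemeasurable (hh : SymNonInc h) : AEMeasurable h μc := by
  rw [μc_eq_restrict_Ioo, ← Ioc_union_Ico_eq_Ioo (by norm_num : -(1/2 : ℝ) < 0) (by norm_num),
    aemeasurable_union_iff]
  refine ⟨aemeasurable_restrict_of_monotoneOn measurableSet_Ioc fun x hx y hy hxy => ?_,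
    aemeasurable_restrict_of_antitoneOn measurableSet_Ico hh.anti⟩
  refine hh.apply_le_of_abs_le ⟨hy.1, by linarith [hy.2]⟩ ⟨hx.1, by linarith [hx.2]⟩ ?_
  rw [abs_of_nonpos hx.2, abs_of_nonpos hy.2]
  linarith

theorem superlevel_ae_le_or_ae_ge (hh₁ : SymNonInc h₁) (hh₂ : SymNonInc h₂) (a b : ℝ) :
    {x | a < h₁ x} ≤ᵐ[μc] {x | b < h₂ x} ∨ {x | b < h₂ x} ≤ᵐ[μc] {x | a < h₁ x} := by
  suffices (∀ x ∈ Ioo (-(1/2) : ℝ) (1/2), a < h₁ x → b < h₂ x) ∨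
      (∀ x ∈ Ioo (-(1/2) : ℝ) (1/2), b < h₂ x → a < h₁ x) by
    refine this.imp (fun H => ?_) (fun H => ?_) <;>
      filter_upwards [ae_mem_Ioo_μc] with x hx using H x hx
  by_contra! hcon
  obtain ⟨⟨x, hx, hx₁, hx₂⟩, ⟨y, hy, hy₂, hy₁⟩⟩ := hcon
  rcases le_total |x| |y| with hxy | hyx
  · linarith [hh₂.apply_le_of_abs_le hx hy hxy]
  · linarith [hh₁.apply_le_of_abs_le hy hx hyx]

theorem measure_superlevel_diff_le (hh₁ : SymNonInc h₁) (hh₂ : SymNonInc h₂) (a b : ℝ) :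
    μc ({x | a < h₁ x} \ {x | b < h₂ x}) ≤ μc {x | a < h₁ x} - μc {x | b < h₂ x} := by
  rcases superlevel_ae_le_or_ae_ge hh₁ hh₂ a b with hle | hge
  · rw [ae_le_set.1 hle]
    exact zero_le ..
  · rw [measure_sdiff' _ (nullMeasurableSet_lt aemeasurable_const hh₂.aemeasurable)
      (measure_ne_top _ _), measure_congr (union_ae_eq_left_iff_ae_subset.2 hge)]

end SymNonInc

namespace IsRearrangement

variable {f g fs gs : ℝ → ℝ}

theorem measure_superlevel_eq (hf : AEMeasurable f μc) (hfs : IsRearrangement f fs) (a : ℝ) :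
    μc {x | a < fs x} = μc {x | a < f x} := by
  have hcompl : ∀ u : ℝ → ℝ, {x | a < u x} = {x | u x ≤ a}ᶜ := fun u => by ext; simp
  rw [hcompl, hcompl,
    measure_compl₀ (nullMeasurableSet_le hfs.1.aemeasurable aemeasurable_const)
      (measure_ne_top _ _),
    measure_compl₀ (nullMeasurableSet_le hf aemeasurable_const) (measure_ne_top _ _), hfs.2 a]

theorem measure_superlevel_inter_sublevel_le (hf : AEMeasurable f μc) (hg : AEMeasurable g μc)
    (hfs : IsRearrangement f fs) (hgs : IsRearrangement g gs) (a b : ℝ) :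
    μc {x | a < fs x ∧ gs x ≤ b} ≤ μc {x | a < f x ∧ g x ≤ b} := by
  have hdiff : ∀ u v : ℝ → ℝ, {x | a < u x ∧ v x ≤ b} = {x | a < u x} \ {x | b < v x} :=
    fun u v => by ext; simp
  calc μc {x | a < fs x ∧ gs x ≤ b}
      ≤ μc {x | a < fs x} - μc {x | b < gs x} := by
        rw [hdiff]; exact hfs.1.measure_superlevel_diff_le hgs.1 a b
    _ = μc {x | a < f x} - μc {x | b < g x} := by
        rw [hfs.measure_superlevel_eq hf, hgs.measure_superlevel_eq hg]
    _ ≤ μc {x | a < f x ∧ g x ≤ b} := by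
        rw [hdiff]; exact le_measure_sdiff

theorem lintegral_ofReal_abs_sub_sub_le (hf : AEMeasurable f μc) (hg : AEMeasurable g μc)
    (hfs : IsRearrangement f fs) (hgs : IsRearrangement g gs) {t : ℝ} (ht : 0 ≤ t) :
    ∫⁻ x, ENNReal.ofReal (|fs x - gs x| - t) ∂μc ≤
      ∫⁻ x, ENNReal.ofReal (|f x - g x| - t) ∂μc := by
  rw [lintegral_ofReal_abs_sub_sub_eq hfs.1.aemeasurable hgs.1.aemeasurable ht,
    lintegral_ofReal_abs_sub_sub_eq hf hg ht]
  exact lintegral_mono fun s =>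
    add_le_add (measure_superlevel_inter_sublevel_le hf hg hfs hgs _ _)
      (measure_superlevel_inter_sublevel_le hg hf hgs hfs _ _)

end IsRearrangement

theorem statement2_general (p : ℝ≥0∞) (hp : 1 ≤ p) (f g fs gs : ℝ → ℝ)
    (hfm : Measurable f) (hgm : Measurable g)
    (hfs : IsRearrangement f fs) (hgs : IsRearrangement g gs) :
    eLpNorm (fs - gs) p μc ≤ eLpNorm (f - g) p μc :=
  eLpNorm_le_of_lintegral_ofReal_abs_sub_le (hfs.1.aemeasurable.sub hgs.1.aemeasurable)
    (hfm.sub hgm).aemeasurable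
    (fun _ ht => hfs.lintegral_ofReal_abs_sub_sub_le hfm.aemeasurable hgm.aemeasurable hgs ht) hp

/-- **Non-expansion property of the rearrangement**: `‖f* - g*‖_p ≤ ‖f - g‖_p`. -/
theorem statement2 (p : ℝ≥0∞) (hp : 1 ≤ p) (f g fs gs : ℝ → ℝ)
    (hfm : Measurable f) (hgm : Measurable g)
    (hf : eLpNorm f p μc < ⊤) (hg : eLpNorm g p μc < ⊤)
    (hfs : IsRearrangement f fs) (hgs : IsRearrangement g gs) :
    eLpNorm (fs - gs) p μc ≤ eLpNorm (f - g) p μc :=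
  statement2_general p hp f g fs gs hfm hgm hfs hgs
end
end

section
/- Let f, g : (0,∞) → (0,∞) be such that f and −g are non-increasing, f(ε) → ∞ and g(ε) → 0 as ε → 0. Let (X, ‖·‖) be a normed vector space, T > 0, and A ⊂ C([0,T], X) such that for some 0 < α < 1, some ε₀ > 0, all ε ∈ (0, ε₀) and all x ∈ A: (i) ‖x_t − x_s‖ ≤ f(ε)(t−s)^α for 0 < ε < s < t ≤ T, and (ii) ‖x_s − x₀‖ ≤ g(ε) for 0 < s < ε. Then A is equicontinuous, i.e. there is a common modulus of continuity valid for all elements of A. -/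
open MeasureTheory Set Filter Real
open scoped ENNReal NNReal

noncomputable section

/-- **Sufficient condition for equicontinuity** (Lemma on relative compactness): if a family
`A ⊂ C([0,T], X)` admits Hölder bounds away from `0` with constant `f(ε)` blowing up as
`ε → 0`, and a small-time modulus `g(ε)` vanishing as `ε → 0`, then `A` is equicontinuous. -/
theorem statement11 {X : Type*} [NormedAddCommGroup X]
    (f g : ℝ → ℝ)
    (hfpos : ∀ ε : ℝ, 0 < ε → 0 < f ε) (hgpos : ∀ ε : ℝ, 0 < ε → 0 < g ε)
    (hfanti : AntitoneOn f (Set.Ioi 0)) (hgmono : MonotoneOn g (Set.Ioi 0))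
    (hflim : Tendsto f (nhdsWithin 0 (Set.Ioi 0)) atTop)
    (hglim : Tendsto g (nhdsWithin 0 (Set.Ioi 0)) (nhds 0))
    (T : ℝ) (hT : 0 < T) (A : Set (ℝ → X))
    (hcont : ∀ x ∈ A, ContinuousOn x (Set.Icc 0 T))
    (α : ℝ) (hα0 : 0 < α) (hα1 : α < 1)
    (ε₀ : ℝ) (hε₀ : 0 < ε₀)
    (h1 : ∀ ε ∈ Set.Ioo (0:ℝ) ε₀, ∀ x ∈ A, ∀ s t : ℝ,
      ε < s → s < t → t ≤ T → ‖x t - x s‖ ≤ f ε * (t - s) ^ α)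
    (h2 : ∀ ε ∈ Set.Ioo (0:ℝ) ε₀, ∀ x ∈ A, ∀ s : ℝ,
      0 < s → s < ε → ‖x s - x 0‖ ≤ g ε) :
    ∀ δ' : ℝ, 0 < δ' → ∃ δ : ℝ, 0 < δ ∧ ∀ x ∈ A, ∀ s ∈ Set.Icc (0:ℝ) T,
      ∀ t ∈ Set.Icc (0:ℝ) T, |t - s| ≤ δ → ‖x t - x s‖ ≤ δ' := by

  intro δ' hδ'
  -- pick ε ∈ (0, ε₀) with g ε < δ'/2
  have hmem : Set.Ioo (0:ℝ) ε₀ ∈ nhdsWithin 0 (Set.Ioi 0) :=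
    Ioo_mem_nhdsGT_of_mem (by constructor <;> simp [hε₀])
  have hev : ∀ᶠ ε in nhdsWithin 0 (Set.Ioi 0), g ε < δ'/2 :=
    hglim.eventually_lt_const (by linarith)
  obtain ⟨ε, hεI, hgε⟩ := ((eventually_mem_set.mpr hmem).and hev).exists
  obtain ⟨hε0, hεε₀⟩ := hεI
  set c := f (ε/2) with hc
  have hcpos : 0 < c := hfpos _ (by linarith)
  set δ₁ : ℝ := (δ'/c) ^ (1/α) with hδ₁
  have hδ₁pos : 0 < δ₁ := Real.rpow_pos_of_pos (by positivity) _
  refine ⟨min (ε/4) δ₁, lt_min (by linarith) hδ₁pos, ?_⟩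
  set δ := min (ε/4) δ₁ with hδdef
  have hδpos : 0 < δ := lt_min (by linarith) hδ₁pos
  intro x hx s hs t ht hst
  have key : ∀ s ∈ Set.Icc (0:ℝ) T, ∀ t ∈ Set.Icc (0:ℝ) T, s ≤ t → t - s ≤ δ →
      ‖x t - x s‖ ≤ δ' := by
    intro s hs t ht hle hd
    rcases eq_or_lt_of_le hle with rfl | hlt
    · simp; positivity
    rcases le_or_gt s (ε/2) with hcase | hcase
    · -- both s, t < ε
      have htε : t < ε := by
        have : δ ≤ ε/4 := min_le_left _ _
        linarith
      have hb1 : ‖x t - x 0‖ ≤ δ'/2 := by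
        have := h2 ε ⟨hε0, hεε₀⟩ x hx t (by linarith [hs.1]) htε
        linarith
      have hb2 : ‖x s - x 0‖ ≤ δ'/2 := by
        rcases eq_or_lt_of_le hs.1 with rfl | hspos
        · simp; positivity
        · have := h2 ε ⟨hε0, hεε₀⟩ x hx s hspos (by linarith)
          linarith
      calc ‖x t - x s‖ = ‖(x t - x 0) - (x s - x 0)‖ := by rw [sub_sub_sub_cancel_right]
        _ ≤ ‖x t - x 0‖ + ‖x s - x 0‖ := norm_sub_le _ _
        _ ≤ δ' := by linarith
    · -- use Hölder bound
      have hh := h1 (ε/2) ⟨by linarith, by linarith⟩ x hx s t hcase hlt ht.2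
      have hpow : (t - s) ^ α ≤ δ₁ ^ α := by
        apply Real.rpow_le_rpow (by linarith) ?_ hα0.le
        exact hd.trans (min_le_right _ _)
      have hδ₁α : δ₁ ^ α = δ'/c := by
        rw [hδ₁, ← Real.rpow_mul (by positivity), one_div_mul_cancel hα0.ne',
          Real.rpow_one]
      calc ‖x t - x s‖ ≤ c * (t - s) ^ α := hh
        _ ≤ c * (δ'/c) := by rw [← hδ₁α]; exact mul_le_mul_of_nonneg_left hpow hcpos.le
        _ = δ' := by field_simp
  rcases le_total s t with h | h
  · exact key s hs t ht h (by rw [abs_of_nonneg (by linarith)] at hst; exact hst)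
  · rw [norm_sub_rev]
    exact key t ht s hs h (by rw [abs_of_nonpos (by linarith)] at hst; linarith)
end
end
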